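/- Let N ≥ 1, m ≥ 1, ℓ ≥ 0 be integers and let λ' = (λ'_1 ≥ … ≥ λ'_m ≥ 0) be a partition of length m with λ'_1 − λ'_m ≤ ℓ. Then the m-staircase Schur polynomial s_{λ(N,m,ℓ,λ')} ∈ ℂ[z_1,…,z_N] satisfies the (m,ℓ)-wheel condition: for every choice of m+1 distinct indices i_1,…,i_{m+1} in {1,…,N} and every choice of m+1 distinct integers k_1,…,k_{m+1} in {1,…,ℓ+m}, substituting z_{i_a} = q^{k_a} w for a = 1,…,m+1 (where w is a new indeterminate and q = exp(2πi/(ℓ+m))) yields the zero polynomial in the remaining variables and w. -/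

import Mathlib

/-!
Put `d = ℓ + m` and `e_j = λ_j + N - j`. After the substitution, row `i_a` of the matrix
`(z_i ^ e_j)` has entries `(q^{k_a} w)^{e_j} = q^{k_a (e_j mod d)} w^{e_j}`. Writing
`N - j = a m + b` gives `e_j = d a + b + λ'_{m-b}`, so the residues `e_j mod d` take at most `m`
values and these `m + 1` rows are linearly dependent over `ℂ`: `Δ_λ` vanishes. The substituted
variables stay pairwise distinct because the `q^{k_a}` are, so `Δ` does not vanish, and
`Δ_λ = s_λ Δ` in the integral domain `ℂ[z, w]` forces `s_λ` to vanish.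
-/

/-- The shifted Vandermonde determinant `Δ_λ(v) = det (v_i ^ (λ_j + N - j))`
(indices `j` one-based, so the exponent is `λ j + (N - 1 - j)` for zero-based `j`). -/
def shiftedVdm {R : Type*} [CommRing R] {N : ℕ} (lam : Fin N → ℕ) (v : Fin N → R) : R :=
  Matrix.det (Matrix.of fun i j : Fin N => v i ^ (lam j + (N - 1 - (j : ℕ))))

/-- The Vandermonde product `Δ(v) = ∏_{i<j} (v i - v j)`. -/
def vdmProd {R : Type*} [CommRing R] {N : ℕ} (v : Fin N → R) : R :=
  ∏ i : Fin N, ∏ j ∈ Finset.Ioi i, (v i - v j)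

/-- The 2-staircase partition `λ_{n,ℓ,ℓ'}` of length `2n`:
its `(2j-1)`-th part is `(n-j)ℓ + ℓ'` and its `(2j)`-th part is `(n-j)ℓ` (1-based). -/
def twoStaircase (n ℓ ℓ' : ℕ) : Fin (2 * n) → ℕ := fun t =>
  if (t : ℕ) % 2 = 0 then (n - 1 - (t : ℕ) / 2) * ℓ + ℓ'
  else (n - ((t : ℕ) + 1) / 2) * ℓ

/-- The staircase partition `μ_{N,h} = ((N-1)h, (N-2)h, …, h, 0)`. -/
def staircasePart (N h : ℕ) : Fin N → ℕ := fun t => (N - 1 - (t : ℕ)) * h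

/-- `exp(2πi/d)`. -/
noncomputable def qRoot (d : ℕ) : ℂ := Complex.exp (2 * Real.pi * Complex.I / (d : ℂ))

/-- The `m`-staircase partition `λ(N,m,ℓ,λ')` of length `N`: its `j`-th part (1-based) is
`ℓa + λ'_{m-b}` where `N - j = am + b`, `a ≥ 0`, `0 ≤ b ≤ m-1`. -/
def mStaircase (N m ℓ : ℕ) (hm : 0 < m) (lam' : Fin m → ℕ) : Fin N → ℕ := fun t =>
  ℓ * ((N - 1 - (t : ℕ)) / m) +
    lam' ⟨m - 1 - (N - 1 - (t : ℕ)) % m, by omega⟩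

open MvPolynomial in
/-- A polynomial `P ∈ ℂ[z_1,…,z_N]` satisfies the `(m,ℓ)`-wheel condition if substituting
`z_{i_a} = q^{k_a} w` (with `q = exp(2πi/(ℓ+m))`, `w` a fresh variable) for any `m+1` distinct
indices `i_a` and any `m+1` distinct `k_a ∈ {1,…,ℓ+m}` yields the zero polynomial.  The
substitution is encoded by an assignment `g` fixing all other variables. -/
def WheelCondition (N m ℓ : ℕ) (P : MvPolynomial (Fin N) ℂ) : Prop :=
  ∀ idx : Fin (m + 1) → Fin N, Function.Injective idx →
  ∀ ks : Fin (m + 1) → ℕ, Function.Injective ks → (∀ a, 1 ≤ ks a ∧ ks a ≤ ℓ + m) →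
  ∀ g : Fin N → MvPolynomial (Fin N ⊕ Unit) ℂ,
    (∀ a, g (idx a) = C (qRoot (ℓ + m) ^ ks a) * X (Sum.inr ())) →
    (∀ r, (∀ a, idx a ≠ r) → g r = X (Sum.inl r)) →
    MvPolynomial.aeval g P = 0

open MvPolynomial

theorem map_vdmProd {R S F : Type*} [CommRing R] [CommRing S] [FunLike F R S] [RingHomClass F R S]
    (f : F) {N : ℕ} (v : Fin N → R) : f (vdmProd v) = vdmProd (f ∘ v) := by
  simp [vdmProd, map_prod, map_sub]

theorem map_shiftedVdm {R S : Type*} [CommRing R] [CommRing S] (f : R →+* S) {N : ℕ}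
    (lam : Fin N → ℕ) (v : Fin N → R) : f (shiftedVdm lam v) = shiftedVdm lam (f ∘ v) := by
  rw [shiftedVdm, f.map_det, shiftedVdm]
  congr 1
  ext i j
  simp

theorem vdmProd_ne_zero {R : Type*} [CommRing R] [IsDomain R] {N : ℕ} {v : Fin N → R}
    (hv : Function.Injective v) : vdmProd v ≠ 0 := by
  simp only [vdmProd, Finset.prod_ne_zero_iff, Finset.mem_Ioi]
  exact fun i _ j hij => sub_ne_zero.mpr (hv.ne hij.ne)

theorem IsPrimitiveRoot.injOn_pow_Icc {M : Type*} [CommMonoid M] {ζ : M} {k : ℕ}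
    (h : IsPrimitiveRoot ζ k) (hk : k ≠ 0) : Set.InjOn (ζ ^ ·) (Set.Icc 1 k) := by
  rintro i ⟨hi₁, hik⟩ j ⟨hj₁, hjk⟩ hij
  obtain ⟨i, rfl⟩ := Nat.exists_eq_add_of_le' hi₁
  obtain ⟨j, rfl⟩ := Nat.exists_eq_add_of_le' hj₁
  simp only [pow_succ] at hij
  have := h.pow_inj (by omega) (by omega) ((h.isUnit hk).mul_right_cancel hij)
  omega

theorem qRoot_isPrimitiveRoot {d : ℕ} (hd : d ≠ 0) : IsPrimitiveRoot (qRoot d) d :=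
  Complex.isPrimitiveRoot_exp d hd

theorem det_pow_eq_zero_of_card_residues_lt {K A n ι : Type*} [Field K] [CommRing A] [IsDomain A]
    [Algebra K A] [Fintype n] [DecidableEq n] [Fintype ι] {d : ℕ} {c : ι → K}
    (hc : ∀ a, c a ^ d = 1) (w : A) (idx : ι → n) (hidx : Function.Injective idx)
    (v : n → A) (hv : ∀ a, v (idx a) = algebraMap K A (c a) * w) (e : n → ℕ)
    (hcard : (Finset.univ.image fun j => e j % d).card < Fintype.card ι) :
    (Matrix.of fun i j => v i ^ e j).det = 0 := by
  set residues := Finset.univ.image fun j => e j % d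
  have hdep : ¬ LinearIndependent K fun a (r : residues) => c a ^ (r : ℕ) := fun hli => by
    have := hli.fintype_card_le_finrank
    rw [Module.finrank_fintype_fun_eq_card, Fintype.card_coe] at this
    omega
  obtain ⟨y, hy, a₀, hya₀⟩ := Fintype.not_linearIndependent_iff.mp hdep
  have hrows : ¬ LinearIndependent A fun a => Matrix.of (fun i j => v i ^ e j) (idx a) := by
    refine Fintype.not_linearIndependent_iff.mpr
      ⟨fun a => algebraMap K A (y a), funext fun j => ?_, a₀, by simpa using hya₀⟩
    have hyj := congrFun hy ⟨e j % d, Finset.mem_image_of_mem _ (Finset.mem_univ j)⟩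
    simp only [Finset.sum_apply, Pi.smul_apply, smul_eq_mul, Pi.zero_apply] at hyj
    simp only [Finset.sum_apply, Pi.smul_apply, Matrix.of_apply, hv, mul_pow, ← map_pow,
      smul_eq_mul, ← mul_assoc, ← map_mul, ← Finset.sum_mul, ← map_sum, Pi.zero_apply]
    simp_rw [pow_eq_pow_mod (e j) (hc _), hyj, map_zero, zero_mul]
  exact Matrix.det_eq_zero_of_not_linearIndependent_rows fun hli => hrows (hli.comp idx hidx)

theorem card_image_mStaircase_exponent_mod_le (N m ℓ : ℕ) (hm : 0 < m) (lam' : Fin m → ℕ) :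
    (Finset.univ.image fun j : Fin N =>
      (mStaircase N m ℓ hm lam' j + (N - 1 - j)) % (ℓ + m)).card ≤ m := by
  calc _ ≤ (Finset.univ.image fun b : Fin m =>
          (b + lam' ⟨m - 1 - b, by omega⟩) % (ℓ + m)).card := by
        refine Finset.card_le_card fun r => ?_
        simp only [Finset.mem_image, Finset.mem_univ, true_and, forall_exists_index]
        rintro j rfl
        refine ⟨⟨(N - 1 - j) % m, Nat.mod_lt _ hm⟩, ?_⟩
        have hdiv := Nat.div_add_mod (N - 1 - j) m
        rw [mStaircase, ← Nat.add_mul_mod_self_left _ (ℓ + m) ((N - 1 - j) / m)]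
        congr 1
        nlinarith
    _ ≤ m := Finset.card_image_le.trans_eq (Finset.card_fin m)

theorem MvPolynomial.injective_of_eq_C_mul_X_or_X {R σ ι : Type*} [CommRing R] [Nontrivial R]
    {idx : ι → σ} {c : ι → R} (hc : Function.Injective c)
    {g : σ → MvPolynomial (σ ⊕ Unit) R}
    (hg₁ : ∀ a, g (idx a) = C (c a) * X (Sum.inr ()))
    (hg₂ : ∀ r, (∀ a, idx a ≠ r) → g r = X (Sum.inl r)) : Function.Injective g := by
  have hform : ∀ r,
      (∃ a, idx a = r ∧ g r = monomial (Finsupp.single (Sum.inr ()) 1) (c a)) ∨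
        g r = monomial (Finsupp.single (Sum.inl r) 1) 1 := fun r => by
    by_cases hr : ∃ a, idx a = r
    · obtain ⟨a, rfl⟩ := hr
      exact .inl ⟨a, rfl, by rw [hg₁, C_mul_X_eq_monomial]⟩
    · push Not at hr
      exact .inr (hg₂ r hr)
  intro r r' h
  rcases hform r with ⟨a, rfl, ha⟩ | hr <;> rcases hform r' with ⟨a', rfl, ha'⟩ | hr'
  · rw [ha, ha', monomial_eq_monomial_iff] at h
    obtain ⟨-, h⟩ | ⟨h₀, h₀'⟩ := h
    · rw [hc h]
    · rw [hc (h₀.trans h₀'.symm)]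
  · simp [ha, hr', monomial_eq_monomial_iff, Finsupp.single_left_inj] at h
  · simp [hr, ha', monomial_eq_monomial_iff, Finsupp.single_left_inj] at h
  · simpa [hr, hr', monomial_eq_monomial_iff, Finsupp.single_left_inj] using h

open MvPolynomial in
/-- The `m`-staircase Schur polynomial `s_{λ(N,m,ℓ,λ')}` (characterized by `Δ_λ = S * Δ`)
satisfies the `(m,ℓ)`-wheel condition, for any partition `λ'` of length `m` with
`λ'_1 - λ'_m ≤ ℓ`. -/
theorem mStaircase_wheel (N m ℓ : ℕ) (hm : 1 ≤ m)
    (lam' : Fin m → ℕ)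
    (S : MvPolynomial (Fin N) ℂ)
    (hS : shiftedVdm (mStaircase N m ℓ hm lam') (fun i => X i)
        = S * vdmProd (fun i => X i)) :
    WheelCondition N m ℓ S := by
  intro idx hidx ks hks hksr g hg₁ hg₂
  have hq := qRoot_isPrimitiveRoot (d := ℓ + m) (by omega)
  have hdet : shiftedVdm (mStaircase N m ℓ hm lam') g = 0 :=
    det_pow_eq_zero_of_card_residues_lt (c := fun a => qRoot (ℓ + m) ^ ks a)
      (fun a => by rw [← pow_mul, pow_mul', hq.pow_eq_one, one_pow])
      (X (Sum.inr ())) idx hidx g (fun a => by rw [hg₁, algebraMap_eq]) _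
      (by simpa using
        (card_image_mStaircase_exponent_mod_le N m ℓ hm lam').trans_lt m.lt_succ_self)
  have hvdm : vdmProd g ≠ 0 := vdmProd_ne_zero <| injective_of_eq_C_mul_X_or_X
    (fun a a' h => hks (hq.injOn_pow_Icc (by omega) (hksr a) (hksr a') h)) hg₁ hg₂
  have hS' := congrArg (aeval g).toRingHom hS
  rw [map_mul, map_shiftedVdm, map_vdmProd] at hS'
  simp only [AlgHom.toRingHom_eq_coe, RingHom.coe_coe, Function.comp_def, aeval_X] at hS'
  exact (mul_eq_zero.mp (hS'.symm.trans hdet)).resolve_right hvdm
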